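/- Let V be a finite-dimensional real inner product space and let S₁, S₂ be subspaces with S₁ ∩ S₂ = {0}. Then there exists θ ∈ [0,1) such that ⟨u,v⟩ ≤ θ for all unit vectors u ∈ S₁ and v ∈ S₂; consequently ‖P_{S₂}(u)‖ ≤ θ‖u‖ for all u ∈ S₁ (where P_{S₁}, P_{S₂} are the orthogonal projections onto S₁, S₂), and for every x ∈ V the series Σ_{k=0}^∞ [ (P_{S₂}P_{S₁})^k(x) − P_{S₁}((P_{S₂}P_{S₁})^k(x)) ] converges absolutely, its partial-term norms decaying geometrically. -/

import Mathlib

open Matrix MeasureTheory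

open scoped Classical

/-- Keep the entries of `M` indexed by `S` and zero out the rest. -/
noncomputable def projS {n : ℕ} (S : Set (Fin n × Fin n)) (M : Matrix (Fin n) (Fin n) ℝ) :
    Matrix (Fin n) (Fin n) ℝ :=
  Matrix.of fun i j => if (i, j) ∈ S then M i j else 0

/-- Zero out the entries of `M` indexed by `S` (projection onto the complement). -/
noncomputable def zeroOn {n : ℕ} (S : Set (Fin n × Fin n)) (M : Matrix (Fin n) (Fin n) ℝ) :
    Matrix (Fin n) (Fin n) ℝ :=
  Matrix.of fun i j => if (i, j) ∈ S then 0 else M i j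

/-- Entrywise ℓ₁ norm. -/
noncomputable def l1Norm {n : ℕ} (M : Matrix (Fin n) (Fin n) ℝ) : ℝ := ∑ i, ∑ j, |M i j|

/-- Entrywise ℓ∞ norm (max of absolute values of the entries). -/
noncomputable def linfNorm {n : ℕ} (M : Matrix (Fin n) (Fin n) ℝ) : ℝ :=
  sSup (Set.range fun q : Fin n × Fin n => |M q.1 q.2|)

/-- Frobenius norm. -/
noncomputable def frobNorm {n : ℕ} (M : Matrix (Fin n) (Fin n) ℝ) : ℝ :=
  Real.sqrt (∑ i, ∑ j, (M i j) ^ 2)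

/-- Nuclear norm: the sum of the singular values, i.e. the trace of `√(MᴴM)`. -/
noncomputable def nuclearNorm {n : ℕ} (M : Matrix (Fin n) (Fin n) ℝ) : ℝ :=
  ((Matrix.posSemidef_conjTranspose_mul_self M).1.cfc Real.sqrt).trace

/-- Spectral norm: the operator norm as a map between Euclidean spaces. -/
noncomputable def specNorm {m l : Type*} [Fintype m] [Fintype l] [DecidableEq l]
    (M : Matrix m l ℝ) : ℝ :=
  ‖LinearMap.toContinuousLinearMap (Matrix.toEuclideanLin M)‖

/-- Entrywise sign matrix. -/
noncomputable def sgnMat {n : ℕ} (M : Matrix (Fin n) (Fin n) ℝ) : Matrix (Fin n) (Fin n) ℝ :=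
  Matrix.of fun i j => Real.sign (M i j)

/-- The support of a matrix, as a set of index pairs. -/
def suppSet {n : ℕ} (M : Matrix (Fin n) (Fin n) ℝ) : Set (Fin n × Fin n) :=
  {q | M q.1 q.2 ≠ 0}

/-- A matrix is a valid clustering matrix iff for some assignment of nodes to clusters,
`K i j = 1` when `i, j` are in the same cluster and `K i j = 0` otherwise. -/
def IsValidClustering {n : ℕ} (K : Matrix (Fin n) (Fin n) ℝ) : Prop :=
  ∃ f : Fin n → Fin n, ∀ i j, K i j = if f i = f j then 1 else 0

/-- Objective of the convex program CP_η. -/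
noncomputable def cpObj {n : ℕ} (η : ℝ) (B K : Matrix (Fin n) (Fin n) ℝ) : ℝ :=
  η * l1Norm B + (1 - η) * nuclearNorm K

/-- Feasibility for the convex program: `P_Ωobs (B + K) = P_Ωobs (I + A)`. -/
def cpFeasible {n : ℕ} (Obs : Set (Fin n × Fin n)) (A B K : Matrix (Fin n) (Fin n) ℝ) : Prop :=
  projS Obs (B + K) = projS Obs (1 + A)

/-- Number of observed disagreements of the clustering matrix `K` with the observed graph. -/
noncomputable def disagreements {n : ℕ} (Obs : Set (Fin n × Fin n))
    (A K : Matrix (Fin n) (Fin n) ℝ) : ℕ :=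
  {q : Fin n × Fin n | q.1 ≠ q.2 ∧ q ∈ Obs ∧ A q.1 q.2 ≠ K q.1 q.2}.ncard

/-- Size of cluster `j` under the assignment `c`. -/
noncomputable def clusterSize {n p : ℕ} (c : Fin n → Fin p) (j : Fin p) : ℕ :=
  {i : Fin n | c i = j}.ncard

/-- Minimum cluster size. -/
noncomputable def KminVal {n p : ℕ} (c : Fin n → Fin p) : ℕ :=
  sInf (Set.range fun j => clusterSize c j)

/-- The valid clustering matrix associated to the assignment `c`. -/
noncomputable def Kmat {n p : ℕ} (c : Fin n → Fin p) : Matrix (Fin n) (Fin n) ℝ :=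
  Matrix.of fun i j => if c i = c j then 1 else 0

/-- The matrix of observed disagreements of the clustering `c`. -/
noncomputable def Bstar {n p : ℕ} (Obs : Set (Fin n × Fin n)) (A : Matrix (Fin n) (Fin n) ℝ)
    (c : Fin n → Fin p) : Matrix (Fin n) (Fin n) ℝ :=
  projS Obs (A + 1 - Kmat c)

/-- Index set of Γ: observed non-disagreement entries (includes the diagonal). -/
def GammaSet {n p : ℕ} (Obs : Set (Fin n × Fin n)) (A : Matrix (Fin n) (Fin n) ℝ)
    (c : Fin n → Fin p) : Set (Fin n × Fin n) :=
  {q | q ∈ Obs ∧ Bstar Obs A c q.1 q.2 = 0}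

/-- The matrix `U` whose `j`-th column is `K_j^{-1/2}` on the indices of cluster `j`. -/
noncomputable def Umat {n p : ℕ} (c : Fin n → Fin p) : Matrix (Fin n) (Fin p) ℝ :=
  Matrix.of fun i j => if c i = j then (Real.sqrt (clusterSize c j))⁻¹ else 0

/-- The subspace `T = {U Xᵀ + Y Uᵀ}` as a set of matrices. -/
def Tspace {n p : ℕ} (U : Matrix (Fin n) (Fin p) ℝ) : Set (Matrix (Fin n) (Fin n) ℝ) :=
  {M | ∃ X Y : Matrix (Fin n) (Fin p) ℝ, M = U * Xᵀ + Y * Uᵀ}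

/-- Orthogonal projection onto `T`. -/
noncomputable def PT {n p : ℕ} (U : Matrix (Fin n) (Fin p) ℝ) (M : Matrix (Fin n) (Fin n) ℝ) :
    Matrix (Fin n) (Fin n) ℝ :=
  U * Uᵀ * M + M * (U * Uᵀ) - U * Uᵀ * M * (U * Uᵀ)

/-- `d_{i,k}`: number of "bad" (unobserved or disagreeing) entries between node `i`
and cluster `k`. -/
noncomputable def dval {n p : ℕ} (Obs : Set (Fin n × Fin n)) (A : Matrix (Fin n) (Fin n) ℝ)
    (c : Fin n → Fin p) (i : Fin n) (k : Fin p) : ℕ :=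
  if k = c i then {j : Fin n | c j = k ∧ ((i, j) ∉ Obs ∨ A i j = 0)}.ncard
  else {j : Fin n | c j = k ∧ ((i, j) ∉ Obs ∨ A i j = 1)}.ncard

/-- `D_max`: the largest fraction of bad entries between a node and a cluster. -/
noncomputable def Dmax {n p : ℕ} (Obs : Set (Fin n × Fin n)) (A : Matrix (Fin n) (Fin n) ℝ)
    (c : Fin n → Fin p) : ℝ :=
  sSup (Set.range fun q : Fin n × Fin p =>
    (dval Obs A c q.1 q.2 : ℝ) / min (clusterSize c q.2 : ℝ) (clusterSize c (c q.1) : ℝ))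


private lemma proj_norm_le' {V : Type*} [NormedAddCommGroup V] [InnerProductSpace ℝ V]
    [FiniteDimensional ℝ V] (S : Submodule ℝ V) (y : V) :
    ‖(Submodule.orthogonalProjectionOnto S y : V)‖ ≤ ‖y‖ := by
  have h1 := (Submodule.orthogonalProjectionOnto S).le_opNorm y
  have h2 := Submodule.orthogonalProjectionOnto_norm_le S
  have h3 : ‖(Submodule.orthogonalProjectionOnto S y : V)‖ = ‖Submodule.orthogonalProjectionOnto S y‖ := rfl
  nlinarith [norm_nonneg y]

private lemma sub_proj_norm_le' {V : Type*} [NormedAddCommGroup V] [InnerProductSpace ℝ V]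
    [FiniteDimensional ℝ V] (S : Submodule ℝ V) (y : V) :
    ‖y - (Submodule.orthogonalProjectionOnto S y : V)‖ ≤ ‖y‖ := by
  have := proj_norm_le' Sᗮ y
  rwa [Submodule.coe_orthogonalProjectionOnto_apply, Submodule.starProjection_orthogonal_val] at this


open scoped RealInnerProductSpace in
/-- principal-angle contraction between subspaces intersecting trivially, and
geometric convergence of the alternating-projection series. -/
theorem alternating_projection_contraction
    {V : Type*} [NormedAddCommGroup V] [InnerProductSpace ℝ V] [FiniteDimensional ℝ V]
    (S₁ S₂ : Submodule ℝ V) (h : S₁ ⊓ S₂ = ⊥) :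
    ∃ θ : ℝ, 0 ≤ θ ∧ θ < 1 ∧
      (∀ u ∈ S₁, ∀ v ∈ S₂, ‖u‖ = 1 → ‖v‖ = 1 → ⟪u, v⟫ ≤ θ) ∧
      (∀ u ∈ S₁, ‖(Submodule.orthogonalProjectionOnto S₂ u : V)‖ ≤ θ * ‖u‖) ∧
      (∀ x : V,
        Summable (fun k : ℕ =>
          ‖(fun z : V => (Submodule.orthogonalProjectionOnto S₂ ((Submodule.orthogonalProjectionOnto S₁ z : V)) : V))^[k] x -
            (Submodule.orthogonalProjectionOnto S₁
              ((fun z : V =>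
                (Submodule.orthogonalProjectionOnto S₂ ((Submodule.orthogonalProjectionOnto S₁ z : V)) : V))^[k] x) : V)‖) ∧
        ∃ C : ℝ, 0 ≤ C ∧ ∀ k : ℕ,
          ‖(fun z : V => (Submodule.orthogonalProjectionOnto S₂ ((Submodule.orthogonalProjectionOnto S₁ z : V)) : V))^[k] x -
            (Submodule.orthogonalProjectionOnto S₁
              ((fun z : V =>
                (Submodule.orthogonalProjectionOnto S₂ ((Submodule.orthogonalProjectionOnto S₁ z : V)) : V))^[k] x) : V)‖ ≤
            C * θ ^ k) := by
  classical
  -- Step 1: find θ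
  obtain ⟨θ, hθ0, hθ1, hinner⟩ :
      ∃ θ : ℝ, 0 ≤ θ ∧ θ < 1 ∧
        (∀ u ∈ S₁, ∀ v ∈ S₂, ‖u‖ = 1 → ‖v‖ = 1 → ⟪u, v⟫ ≤ θ) := by
    by_cases hK : (∃ u ∈ S₁, ‖u‖ = 1) ∧ (∃ v ∈ S₂, ‖v‖ = 1)
    · obtain ⟨⟨u₀, hu₀, hnu₀⟩, ⟨v₀, hv₀, hnv₀⟩⟩ := hK
      set K : Set (V × V) :=
        ((S₁ : Set V) ∩ Metric.sphere 0 1) ×ˢ ((S₂ : Set V) ∩ Metric.sphere 0 1) with hKdef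
      have hcomp : IsCompact K := by
        apply IsCompact.prod
        · exact (isCompact_sphere (0:V) 1).inter_left
            (Submodule.closed_of_finiteDimensional S₁)
        · exact (isCompact_sphere (0:V) 1).inter_left
            (Submodule.closed_of_finiteDimensional S₂)
      have hne : K.Nonempty := ⟨(u₀, v₀), ⟨⟨hu₀, by simp [hnu₀]⟩, ⟨hv₀, by simp [hnv₀]⟩⟩⟩
      obtain ⟨p, hpK, hmax⟩ :=
        hcomp.exists_isMaxOn hne ((continuous_inner (𝕜 := ℝ) (E := V)).continuousOn)
      obtain ⟨⟨hp1, hp1s⟩, ⟨hp2, hp2s⟩⟩ := hpK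
      have hn1 : ‖p.1‖ = 1 := by simpa using hp1s
      have hn2 : ‖p.2‖ = 1 := by simpa using hp2s
      have hlt : ⟪p.1, p.2⟫ < 1 := by
        rcases lt_or_eq_of_le (by
          calc ⟪p.1, p.2⟫ ≤ ‖p.1‖ * ‖p.2‖ := real_inner_le_norm _ _
          _ = 1 := by rw [hn1, hn2, one_mul]) with h1 | h1
        · exact h1
        · exfalso
          have : p.1 = p.2 := (inner_eq_one_iff_of_norm_eq_one hn1 hn2).1 h1
          have : p.1 ∈ S₁ ⊓ S₂ := ⟨hp1, this ▸ hp2⟩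
          rw [h] at this
          simp_all [Submodule.mem_bot]
      refine ⟨max ⟪p.1, p.2⟫ 0, le_max_right _ _, max_lt hlt one_pos, ?_⟩
      intro u hu v hv hnu hnv
      have hm : ⟪u, v⟫ ≤ ⟪p.1, p.2⟫ :=
        hmax (show ((u,v)) ∈ K from ⟨⟨hu, by simp [hnu]⟩, ⟨hv, by simp [hnv]⟩⟩)
      exact le_trans hm (le_max_left _ _)
    · refine ⟨0, le_refl _, one_pos, ?_⟩
      intro u hu v hv hnu hnv
      exact absurd ⟨⟨u, hu, hnu⟩, ⟨v, hv, hnv⟩⟩ hK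
  -- Step 2: projection contraction
  have hproj : ∀ u ∈ S₁, ‖(Submodule.orthogonalProjectionOnto S₂ u : V)‖ ≤ θ * ‖u‖ := by
    intro u hu
    set w : V := (Submodule.orthogonalProjectionOnto S₂ u : V) with hwdef
    have hw : w ∈ S₂ := (Submodule.orthogonalProjectionOnto S₂ u).2
    have hiw : ⟪u, w⟫ = ‖w‖ ^ 2 := by
      have horth : u - w ∈ S₂ᗮ := Submodule.sub_starProjection_mem_orthogonal u
      have h0 : ⟪w, u - w⟫ = 0 := (Submodule.mem_orthogonal S₂ (u - w)).1 horth w hw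
      have h0' : ⟪u - w, w⟫ = 0 := by rw [real_inner_comm]; exact h0
      have : ⟪u, w⟫ = ⟪u - w, w⟫ + ⟪w, w⟫ := by rw [inner_sub_left]; ring
      rw [this, h0', real_inner_self_eq_norm_sq]; ring
    by_cases hw0 : w = 0
    · rw [hw0]
      simpa using mul_nonneg hθ0 (norm_nonneg u)
    by_cases hu0 : u = 0
    · simp [hwdef, hu0] at hw0
    have hwn : 0 < ‖w‖ := norm_pos_iff.2 hw0
    have hun : 0 < ‖u‖ := norm_pos_iff.2 hu0
    have key : ⟪u, w⟫ ≤ θ * (‖u‖ * ‖w‖) := by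
      have hmem1 : ‖u‖⁻¹ • u ∈ S₁ := S₁.smul_mem _ hu
      have hmem2 : ‖w‖⁻¹ • w ∈ S₂ := S₂.smul_mem _ hw
      have hn1 : ‖‖u‖⁻¹ • u‖ = 1 := by
        rw [norm_smul, norm_inv, norm_norm, inv_mul_cancel₀ hun.ne']
      have hn2 : ‖‖w‖⁻¹ • w‖ = 1 := by
        rw [norm_smul, norm_inv, norm_norm, inv_mul_cancel₀ hwn.ne']
      have := hinner _ hmem1 _ hmem2 hn1 hn2
      rw [real_inner_smul_left, real_inner_smul_right] at this
      have heq : ⟪u, w⟫ = (‖u‖ * ‖w‖) * (‖u‖⁻¹ * (‖w‖⁻¹ * ⟪u, w⟫)) := by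
        field_simp
      calc ⟪u, w⟫ = (‖u‖ * ‖w‖) * (‖u‖⁻¹ * (‖w‖⁻¹ * ⟪u, w⟫)) := heq
      _ ≤ (‖u‖ * ‖w‖) * θ :=
          mul_le_mul_of_nonneg_left this (by positivity)
      _ = θ * (‖u‖ * ‖w‖) := by ring
    have : ‖w‖ ^ 2 ≤ θ * ‖u‖ * ‖w‖ := by rw [← hiw]; nlinarith [key]
    nlinarith [this, hwn]
  refine ⟨θ, hθ0, hθ1, hinner, hproj, ?_⟩
  intro x
  set g : V → V := fun z : V => (Submodule.orthogonalProjectionOnto S₂ ((Submodule.orthogonalProjectionOnto S₁ z : V)) : V)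
    with hg
  have hgle : ∀ z : V, ‖g z‖ ≤ θ * ‖z‖ := by
    intro z
    calc ‖g z‖ ≤ θ * ‖(Submodule.orthogonalProjectionOnto S₁ z : V)‖ :=
          hproj _ (Submodule.orthogonalProjectionOnto S₁ z).2
    _ ≤ θ * ‖z‖ := by
          have := proj_norm_le' S₁ z
          nlinarith [this]
  have hiter : ∀ k : ℕ, ‖g^[k] x‖ ≤ θ ^ k * ‖x‖ := by
    intro k
    induction k with
    | zero => simp
    | succ n ih =>
      rw [Function.iterate_succ_apply']
      calc ‖g (g^[n] x)‖ ≤ θ * ‖g^[n] x‖ := hgle _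
      _ ≤ θ * (θ ^ n * ‖x‖) := by nlinarith [ih]
      _ = θ ^ (n + 1) * ‖x‖ := by ring
  have hterm : ∀ k : ℕ,
      ‖g^[k] x - (Submodule.orthogonalProjectionOnto S₁ (g^[k] x) : V)‖ ≤ ‖x‖ * θ ^ k := by
    intro k
    calc ‖g^[k] x - (Submodule.orthogonalProjectionOnto S₁ (g^[k] x) : V)‖ ≤ ‖g^[k] x‖ :=
          sub_proj_norm_le' S₁ _
    _ ≤ θ ^ k * ‖x‖ := hiter k
    _ = ‖x‖ * θ ^ k := by ring
  constructor
  · apply Summable.of_nonneg_of_le (fun k => norm_nonneg _) hterm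
    exact (summable_geometric_of_lt_one hθ0 hθ1).mul_left ‖x‖
  · exact ⟨‖x‖, norm_nonneg x, hterm⟩
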